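/- arXiv:2304.05693 — 2 statements merged into one kernel-verified Lean document; each statement's English description precedes it below -/
import Mathlib

section
/- Let e : ℕ → ℝ^p satisfy e(k+1) = A_k e(k) + h ξ(k) where each A_k ∈ ℝ^{p×p} is symmetric and satisfies A_k + A_k² ≤ −hω I for some h, ω > 0, and ‖ξ(k)‖ ≤ ξ̄ for all k. Then V(k) = ½‖e(k)‖² satisfies V(k+1) − V(k) ≤ −hω ‖e(k)‖² + h ξ̄ ‖e(k)‖ + h² ξ̄² for all k. -/
open Matrix
open scoped RealInnerProductSpace

/-!
Write `x = e k` and `y = A_k x`. Symmetry of `A_k` turns the hypothesis on `A_k + A_k²` into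
`⟪y, x⟫ + ‖y‖² ≤ -hω‖x‖²`, and Cauchy–Schwarz on `⟪y, x⟫` gives `‖y‖² - ‖y‖‖x‖ ≤ -hω‖x‖²`.
This forces `‖y‖ ≤ ‖x‖`, and subtracting `½(‖y‖ - ‖x‖)² ≥ 0` gives `½‖y‖² - ½‖x‖² ≤ -hω‖x‖²`.
Expanding `½‖y + hξ‖²`, the cross term is `h⟪y, ξ⟫ ≤ hξ̄‖x‖` and the noise term `½h²‖ξ‖² ≤ h²ξ̄²`.
-/

section InnerProductSpace

variable {E : Type*} [NormedAddCommGroup E] [InnerProductSpace ℝ E] {x y : E} {c : ℝ}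

lemma norm_sq_sub_mul_norm_le_of_inner_add_norm_sq_le
    (hxy : ⟪y, x⟫ + ‖y‖ ^ 2 ≤ -c * ‖x‖ ^ 2) : ‖y‖ ^ 2 - ‖y‖ * ‖x‖ ≤ -c * ‖x‖ ^ 2 := by
  have hcs : -(‖y‖ * ‖x‖) ≤ ⟪y, x⟫ := (abs_le.mp (abs_real_inner_le_norm y x)).1
  linarith

lemma norm_le_of_inner_add_norm_sq_le (hc : 0 ≤ c)
    (hxy : ⟪y, x⟫ + ‖y‖ ^ 2 ≤ -c * ‖x‖ ^ 2) : ‖y‖ ≤ ‖x‖ := by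
  have hxy' := norm_sq_sub_mul_norm_le_of_inner_add_norm_sq_le hxy
  nlinarith [norm_nonneg x, norm_nonneg y, mul_nonneg hc (sq_nonneg ‖x‖)]

lemma half_norm_sq_sub_le_of_inner_add_norm_sq_le
    (hxy : ⟪y, x⟫ + ‖y‖ ^ 2 ≤ -c * ‖x‖ ^ 2) :
    1 / 2 * ‖y‖ ^ 2 - 1 / 2 * ‖x‖ ^ 2 ≤ -c * ‖x‖ ^ 2 := by
  have hxy' := norm_sq_sub_mul_norm_le_of_inner_add_norm_sq_le hxy
  linarith [sq_nonneg (‖y‖ - ‖x‖)]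

lemma half_norm_add_smul_sq_sub_le {ξ : E} {h ξbar : ℝ} (hh : 0 ≤ h) (hc : 0 ≤ c)
    (hxy : ⟪y, x⟫ + ‖y‖ ^ 2 ≤ -c * ‖x‖ ^ 2) (hξ : ‖ξ‖ ≤ ξbar) :
    1 / 2 * ‖y + h • ξ‖ ^ 2 - 1 / 2 * ‖x‖ ^ 2 ≤
      -c * ‖x‖ ^ 2 + h * ξbar * ‖x‖ + h ^ 2 * ξbar ^ 2 := by
  have hexpand : ‖y + h • ξ‖ ^ 2 = ‖y‖ ^ 2 + 2 * (h * ⟪y, ξ⟫) + h ^ 2 * ‖ξ‖ ^ 2 := by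
    rw [norm_add_sq_real, real_inner_smul_right, norm_smul, Real.norm_of_nonneg hh]
    ring
  have hcross : ⟪y, ξ⟫ ≤ ‖x‖ * ξbar :=
    (real_inner_le_norm y ξ).trans <| mul_le_mul (norm_le_of_inner_add_norm_sq_le hc hxy) hξ
      (norm_nonneg ξ) (norm_nonneg x)
  have hξsq : ‖ξ‖ ^ 2 ≤ ξbar ^ 2 := pow_le_pow_left₀ (norm_nonneg ξ) hξ 2
  have hdecay := half_norm_sq_sub_le_of_inner_add_norm_sq_le hxy
  rw [hexpand]
  linarith [mul_le_mul_of_nonneg_left hcross hh, mul_le_mul_of_nonneg_left hξsq (sq_nonneg h),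
    mul_nonneg (sq_nonneg h) (sq_nonneg ξbar)]

end InnerProductSpace

lemma Matrix.IsSymm.inner_toEuclideanLin_add_mul_self {n : Type*} [Fintype n] [DecidableEq n]
    {A : Matrix n n ℝ} (hA : A.IsSymm) (x : EuclideanSpace ℝ n) :
    ⟪toEuclideanLin (A + A * A) x, x⟫ = ⟪toEuclideanLin A x, x⟫ + ‖toEuclideanLin A x‖ ^ 2 := by
  have hsymm : (toEuclideanLin A).IsSymmetric :=
    isSymmetric_toEuclideanLin_iff.mpr (isHermitian_iff_isSymm.mpr hA)
  rw [map_add, toLpLin_mul_same, LinearMap.add_apply, LinearMap.comp_apply, inner_add_left,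
    hsymm (toEuclideanLin A x) x, real_inner_self_eq_norm_sq]

/-- Discrete Lyapunov decrement estimate of Theorem 2: if
`e(k+1) = A_k e(k) + h ξ(k)` with each `A_k` symmetric satisfying
`A_k + A_k² ≤ −hω I` and `‖ξ(k)‖ ≤ ξ̄`, then `V(k) = ½‖e(k)‖²` satisfies
`V(k+1) − V(k) ≤ −hω‖e(k)‖² + hξ̄‖e(k)‖ + h²ξ̄²`. -/
theorem stmt_10 (p : ℕ) (h ω ξbar : ℝ) (hh : 0 < h) (hω : 0 < ω)
    (A : ℕ → Matrix (Fin p) (Fin p) ℝ) (hAsymm : ∀ k, (A k).IsSymm)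
    (hA : ∀ k (x : EuclideanSpace ℝ (Fin p)),
      ⟪(Matrix.toEuclideanLin (A k + A k * A k)) x, x⟫ ≤ -(h * ω) * ‖x‖ ^ 2)
    (e ξ : ℕ → EuclideanSpace ℝ (Fin p)) (hξ : ∀ k, ‖ξ k‖ ≤ ξbar)
    (he : ∀ k, e (k + 1) = (Matrix.toEuclideanLin (A k)) (e k) + h • ξ k) :
    ∀ k, (1 / 2) * ‖e (k + 1)‖ ^ 2 - (1 / 2) * ‖e k‖ ^ 2 ≤
      -(h * ω) * ‖e k‖ ^ 2 + h * ξbar * ‖e k‖ + h ^ 2 * ξbar ^ 2 := by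
  intro k
  have hquad := hA k (e k)
  rw [(hAsymm k).inner_toEuclideanLin_add_mul_self] at hquad
  rw [he k]
  exact half_norm_add_smul_sq_sub_le hh.le (mul_pos hh hω).le hquad (hξ k)
end

section
/- Consider the scalar discrete SIS dynamics: for i ∈ {1,…,n}, x_i(k+1) = h(1 − x_i(k)) Σ_{j=1}^n w_{ij} d_j x_j(k) + (1 − h δ_i) x_i(k), with h > 0, w_{ij} ≥ 0, d_j ≥ 0, δ_i ≥ 0. If h δ_i ≤ 1 and h Σ_{j=1}^n w_{ij} d_j ≤ 1 for all i, then the hypercube [0,1]^n is forward invariant: x(k) ∈ [0,1]^n implies x(k+1) ∈ [0,1]^n. -/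
open Finset

/-! With `S = Σ_j w_{ij} d_j x_j` we have `0 ≤ S ≤ Σ_j w_{ij} d_j`, so the infection term
`h (1 - x_i) S` lies in `[0, 1 - x_i]` and the recovery term `(1 - hδ_i) x_i` in `[0, x_i]`;
their sum therefore lies in `[0, 1]`. -/

variable {R : Type*} [Field R] [LinearOrder R] [IsStrictOrderedRing R]

theorem Finset.sum_mul_mem_Icc {ι : Type*} (s : Finset ι) {a x : ι → R}
    (ha : ∀ j ∈ s, 0 ≤ a j) (hx : ∀ j ∈ s, x j ∈ Set.Icc (0 : R) 1) :
    ∑ j ∈ s, a j * x j ∈ Set.Icc 0 (∑ j ∈ s, a j) :=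
  ⟨sum_nonneg fun j hj => mul_nonneg (ha j hj) (hx j hj).1,
    sum_le_sum fun j hj => mul_le_of_le_one_right (ha j hj) (hx j hj).2⟩

theorem sis_update_mem_Icc {h p x S T : R} (hh : 0 ≤ h) (hp0 : 0 ≤ p) (hp1 : p ≤ 1)
    (hx : x ∈ Set.Icc (0 : R) 1) (hS : S ∈ Set.Icc 0 T) (hT : h * T ≤ 1) :
    h * (1 - x) * S + (1 - p) * x ∈ Set.Icc (0 : R) 1 := by
  obtain ⟨hx0, hx1⟩ := hx
  have hrec : (1 - p) * x ≤ x := mul_le_of_le_one_left hx0 (by linarith)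
  have hinf : h * (1 - x) * S ≤ 1 - x :=
    calc h * (1 - x) * S = (1 - x) * (h * S) := by ring
      _ ≤ (1 - x) * 1 :=
        mul_le_mul_of_nonneg_left ((mul_le_mul_of_nonneg_left hS.2 hh).trans hT) (by linarith)
      _ = 1 - x := mul_one _
  constructor
  · have := mul_nonneg (mul_nonneg hh (sub_nonneg.2 hx1)) hS.1
    have := mul_nonneg (sub_nonneg.2 hp1) hx0
    linarith
  · linarith

/-- Forward invariance of `[0,1]^n` for the discrete SIS epidemic dynamics
`x_i⁺ = h(1 − x_i) Σ_j w_{ij} d_j x_j + (1 − hδ_i) x_i` under the step-size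
conditions `hδ_i ≤ 1` and `h Σ_j w_{ij} d_j ≤ 1`. -/
theorem stmt_12 (n : ℕ) (h : ℝ) (hh : 0 < h)
    (w : Fin n → Fin n → ℝ) (hw : ∀ i j, 0 ≤ w i j)
    (d : Fin n → ℝ) (hd : ∀ j, 0 ≤ d j)
    (δ : Fin n → ℝ) (hδ : ∀ i, 0 ≤ δ i)
    (hδ1 : ∀ i, h * δ i ≤ 1)
    (hw1 : ∀ i, h * ∑ j, w i j * d j ≤ 1)
    (x : Fin n → ℝ) (hx : ∀ i, x i ∈ Set.Icc (0 : ℝ) 1) :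
    ∀ i, h * (1 - x i) * (∑ j, w i j * d j * x j) + (1 - h * δ i) * x i ∈
      Set.Icc (0 : ℝ) 1 := fun i =>
  sis_update_mem_Icc hh.le (mul_nonneg hh.le (hδ i)) (hδ1 i) (hx i)
    (univ.sum_mul_mem_Icc (fun j _ => mul_nonneg (hw i j) (hd j)) fun j _ => hx j) (hw1 i)
end
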